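/- In a directed-complete effect algebra, if a ⊥ s for every s in a nonempty directed subset S, then a ⊥ ⋁S and a ⊕ ⋁S = ⋁_{s∈S}(a ⊕ s). -/
import Mathlib


universe u

/-- `EAle orth add a b` : the effect-algebra order `a ≤ b` iff `∃ c, a ⊕ c = b`. -/
def EAle {α : Type u} (orth : α → α → Prop) (add : α → α → α) (a b : α) : Prop :=
  ∃ c, orth a c ∧ add a c = b

/-- An effect algebra: partial sum `add` (defined when `orth` holds), zero, complement. -/
structure EffectAlgebra (α : Type u) where
  orth : α → α → Prop
  add : α → α → α
  zero : α
  compl : α → α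
  orth_comm : ∀ a b, orth a b → orth b a
  add_comm' : ∀ a b, orth a b → add a b = add b a
  orth_zero : ∀ a, orth a zero
  add_zero' : ∀ a, add a zero = a
  orth_assoc₁ : ∀ a b c, orth a b → orth (add a b) c → orth b c
  orth_assoc₂ : ∀ a b c, orth a b → orth (add a b) c → orth a (add b c)
  add_assoc' : ∀ a b c, orth a b → orth (add a b) c → add (add a b) c = add a (add b c)
  orth_compl : ∀ a, orth a (compl a)
  add_compl : ∀ a, add a (compl a) = compl zero
  compl_unique : ∀ a b, orth a b → add a b = compl zero → b = compl a
  orth_one : ∀ a, orth a (compl zero) → a = zero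

namespace EffectAlgebra
variable {α : Type u}
/-- The effect-algebra order. -/
def le (E : EffectAlgebra α) : α → α → Prop := EAle E.orth E.add
/-- The unit `1 := 0⊥`. -/
def one (E : EffectAlgebra α) : α := E.compl E.zero
end EffectAlgebra

namespace EffectAlgebra
variable {α : Type u} (E : EffectAlgebra α)

lemma compl_compl' (b : α) : E.compl (E.compl b) = b := by
  symm
  refine E.compl_unique _ _ (E.orth_comm _ _ (E.orth_compl b)) ?_
  rw [E.add_comm' _ _ (E.orth_comm _ _ (E.orth_compl b)), E.add_compl]

lemma cancel (a b c : α) (hab : E.orth a b) (hac : E.orth a c)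
    (h : E.add a b = E.add a c) : b = c := by
  set e := E.compl (E.add a b) with he
  have key : ∀ x, E.orth a x → E.add a x = E.add a b → E.add x (E.add a e) = E.compl E.zero ∧ E.orth x (E.add a e) := by
    intro x hax hx
    have h1 : E.orth (E.add a x) e := hx ▸ E.orth_compl _
    have h2 : E.add (E.add a x) e = E.compl E.zero := by rw [hx]; exact E.add_compl _
    have hxa : E.orth x a := E.orth_comm _ _ hax
    have hcomm : E.add a x = E.add x a := E.add_comm' _ _ hax
    rw [hcomm] at h1 h2
    exact ⟨(E.add_assoc' x a e hxa h1) ▸ h2, E.orth_assoc₂ x a e hxa h1⟩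
  have kb := key b hab rfl
  have kc := key c hac h.symm
  have eb : E.add a e = E.compl b := E.compl_unique _ _ kb.2 kb.1
  have ec : E.add a e = E.compl c := E.compl_unique _ _ kc.2 kc.1
  rw [← E.compl_compl' b, ← eb, ec, E.compl_compl']

/-- reverse associativity -/
lemma assoc_rev (a b c : α) (hab : E.orth a b) (hbc : E.orth b c)
    (h : E.orth a (E.add b c)) :
    E.orth (E.add a b) c ∧ E.add (E.add a b) c = E.add a (E.add b c) := by
  have h1 : E.orth (E.add b c) a := E.orth_comm _ _ h
  have hca : E.orth c a := E.orth_assoc₁ b c a hbc h1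
  have hcb : E.orth c b := E.orth_comm _ _ hbc
  have h2 : E.orth a (E.add c b) := by
    rwa [E.add_comm' c b hcb]
  have h3 : E.orth (E.add c b) a := E.orth_comm _ _ h2
  have h4 : E.orth b a := E.orth_assoc₁ c b a hcb h3
  have h5 : E.orth c (E.add b a) := E.orth_assoc₂ c b a hcb h3
  have h6 : E.orth (E.add a b) c := by
    apply E.orth_comm; rwa [E.add_comm' a b hab]
  exact ⟨h6, E.add_assoc' a b c hab h6⟩

lemma le_trans' {x y z : α} (h1 : E.le x y) (h2 : E.le y z) : E.le x z := by
  obtain ⟨c, hc, rfl⟩ := h1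
  obtain ⟨d, hd, rfl⟩ := h2
  exact ⟨E.add c d, E.orth_assoc₂ x c d hc hd, (E.add_assoc' x c d hc hd).symm⟩

lemma eq_zero_of_add_eq_zero {c d : α} (hcd : E.orth c d) (h : E.add c d = E.zero) :
    c = E.zero := by
  have h0 : E.orth E.zero (E.compl E.zero) := E.orth_compl _
  have h1 : E.orth (E.add c d) (E.compl E.zero) := h ▸ h0
  have h2 : E.orth c (E.add d (E.compl E.zero)) := E.orth_assoc₂ c d _ hcd h1
  have h3 : E.orth d (E.compl E.zero) := E.orth_assoc₁ c d _ hcd h1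
  have hd0 : d = E.zero := E.orth_one d h3
  apply E.orth_one
  rw [hd0] at h2
  rwa [E.add_comm' E.zero _ h0, E.add_zero'] at h2

lemma le_antisymm' {x y : α} (h1 : E.le x y) (h2 : E.le y x) : x = y := by
  obtain ⟨c, hc, rfl⟩ := h1
  obtain ⟨d, hd, hx⟩ := h2
  have hcd : E.orth c d := E.orth_assoc₁ x c d hc hd
  have hx' : E.add x (E.add c d) = E.add x E.zero := by
    rw [← E.add_assoc' x c d hc hd, hx, E.add_zero']
  have := E.cancel x (E.add c d) E.zero (E.orth_assoc₂ x c d hc hd) (E.orth_zero x) hx'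
  have hc0 : c = E.zero := E.eq_zero_of_add_eq_zero hcd this
  rw [hc0, E.add_zero']

lemma le_compl_of_orth {a s : α} (h : E.orth a s) : E.le s (E.compl a) := by
  have h1 : E.orth (E.add a s) (E.compl (E.add a s)) := E.orth_compl _
  have h2 : E.orth s (E.compl (E.add a s)) := E.orth_assoc₁ a s _ h h1
  have h3 : E.orth a (E.add s (E.compl (E.add a s))) := E.orth_assoc₂ a s _ h h1
  refine ⟨E.compl (E.add a s), h2, ?_⟩
  have := E.add_assoc' a s _ h h1
  rw [E.add_compl] at this
  exact E.compl_unique a _ h3 this.symm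

lemma orth_of_le_compl {a s : α} (h : E.le s (E.compl a)) : E.orth a s := by
  obtain ⟨c, hc, hsc⟩ := h
  have h1 : E.orth a (E.add s c) := hsc ▸ E.orth_compl a
  have h2 : E.orth (E.add c s) a := by
    apply E.orth_comm; rwa [E.add_comm' c s (E.orth_comm _ _ hc)]
  exact E.orth_comm _ _ (E.orth_assoc₁ c s a (E.orth_comm _ _ hc) h2)

lemma add_mono {a x y : α} (hax : E.orth a x) (hay : E.orth a y) (h : E.le x y) :
    E.le (E.add a x) (E.add a y) := by
  obtain ⟨c, hc, rfl⟩ := h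
  obtain ⟨h1, h2⟩ := E.assoc_rev a x c hax hc hay
  exact ⟨c, h1, h2⟩

lemma le_of_add_le_add {a x y : α} (hax : E.orth a x) (hay : E.orth a y)
    (h : E.le (E.add a x) (E.add a y)) : E.le x y := by
  obtain ⟨c, hc, hc2⟩ := h
  have hxc : E.orth x c := E.orth_assoc₁ a x c hax hc
  have h2 : E.orth a (E.add x c) := E.orth_assoc₂ a x c hax hc
  rw [E.add_assoc' a x c hax hc] at hc2
  exact ⟨c, hxc, E.cancel a _ _ h2 hay hc2⟩

lemma le_add_right {a s : α} (h : E.orth a s) : E.le a (E.add a s) := ⟨s, h, rfl⟩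

end EffectAlgebra

/-- A directed-complete effect algebra: every nonempty directed subset has a supremum. -/
structure DCEffectAlgebra (α : Type u) extends EffectAlgebra α where
  dSup : Set α → α
  dSup_upper : ∀ S : Set α, S.Nonempty → DirectedOn (EAle orth add) S →
    ∀ s ∈ S, EAle orth add s (dSup S)
  dSup_least : ∀ S : Set α, S.Nonempty → DirectedOn (EAle orth add) S →
    ∀ b, (∀ s ∈ S, EAle orth add s b) → EAle orth add (dSup S) b

/-- If `a ⊥ s` for all `s` in a nonempty directed set `S`, then `a ⊥ ⋁S` and
`a ⊕ ⋁S = ⋁_{s ∈ S} (a ⊕ s)`. -/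
theorem dcea_add_dSup {α : Type u} (E : DCEffectAlgebra α) (a : α) (S : Set α)
    (hne : S.Nonempty) (hdir : DirectedOn E.le S)
    (h : ∀ s ∈ S, E.orth a s) :
    E.orth a (E.dSup S) ∧
    E.add a (E.dSup S) = E.dSup ((fun s => E.add a s) '' S) := by
  set F := E.toEffectAlgebra with hF
  have hub : ∀ s ∈ S, F.le s (F.compl a) := fun s hs => F.le_compl_of_orth (h s hs)
  have hDle : F.le (E.dSup S) (F.compl a) := E.dSup_least S hne hdir _ hub
  have hoD : F.orth a (E.dSup S) := F.orth_of_le_compl hDle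
  set T := (fun s => F.add a s) '' S with hT
  have hTne : T.Nonempty := hne.image _
  have hTdir : DirectedOn (EAle F.orth F.add) T := by
    rintro _ ⟨s, hs, rfl⟩ _ ⟨t, ht, rfl⟩
    obtain ⟨u, hu, hsu, htu⟩ := hdir s hs t ht
    exact ⟨F.add a u, ⟨u, hu, rfl⟩, F.add_mono (h s hs) (h u hu) hsu,
      F.add_mono (h t ht) (h u hu) htu⟩
  refine ⟨hoD, F.le_antisymm' ?_ ?_⟩
  · have haD : F.le a (E.dSup T) := by
      obtain ⟨s0, hs0⟩ := hne
      exact F.le_trans' (F.le_add_right (h s0 hs0))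
        (E.dSup_upper T hTne hTdir _ ⟨s0, hs0, rfl⟩)
    obtain ⟨d, hd, hdD⟩ := haD
    have hle : ∀ s ∈ S, F.le s d := by
      intro s hs
      apply F.le_of_add_le_add (h s hs) hd
      rw [hdD]
      exact E.dSup_upper T hTne hTdir _ ⟨s, hs, rfl⟩
    have h1 : F.le (E.dSup S) d := E.dSup_least S hne hdir d hle
    have h2 := F.add_mono hoD hd h1
    rwa [hdD] at h2
  · exact E.dSup_least T hTne hTdir _ (by
      rintro _ ⟨s, hs, rfl⟩
      exact F.add_mono (h s hs) hoD (E.dSup_upper S hne hdir s hs))
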